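/- arXiv:1401.7091 — 3 statements merged into one kernel-verified Lean document; each statement's English description precedes it below -/
import Mathlib

section
/- Let n ≥ 4. Then 2 = q(C_n^→) < q(B_{n,2}) < 4 < q(B_{n,3}) < 6 < ⋯ < 2n−4 < q(B_{n,n−1}) < q(K_n^↔) = 2n−2; that is, for every d with 2 ≤ d ≤ n−1 one has 2d−2 < q(B_{n,d}) < 2d. -/
open Matrix

namespace SignlessDigraph

variable {n : ℕ}

/-- Real adjacency matrix of a (multi)digraph on `Fin n`, given by arc multiplicities. -/
def adjMat (W : Fin n → Fin n → ℕ) : Matrix (Fin n) (Fin n) ℝ :=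
  fun i j => (W i j : ℝ)

/-- Outdegree of a vertex. -/
def outdeg (W : Fin n → Fin n → ℕ) (i : Fin n) : ℕ := ∑ j, W i j

/-- Indegree of a vertex. -/
def indeg (W : Fin n → Fin n → ℕ) (i : Fin n) : ℕ := ∑ j, W j i

/-- The signless Laplacian matrix `Q(D) = diag(outdegrees) + A(D)`. -/
noncomputable def Qmat (W : Fin n → Fin n → ℕ) : Matrix (Fin n) (Fin n) ℝ :=
  Matrix.diagonal (fun i => (outdeg W i : ℝ)) + adjMat W

/-- Spectral radius of a real matrix: the maximum modulus of its (complex) eigenvalues. -/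
noncomputable def radius (M : Matrix (Fin n) (Fin n) ℝ) : ℝ :=
  sSup {r : ℝ | ∃ μ ∈ spectrum ℂ (M.map ((↑) : ℝ → ℂ)), r = ‖μ‖}

/-- The signless Laplacian spectral radius `q(D)`. -/
noncomputable def q (W : Fin n → Fin n → ℕ) : ℝ := radius (Qmat W)

/-- The (adjacency) spectral radius `ρ(D)`. -/
noncomputable def rho (W : Fin n → Fin n → ℕ) : ℝ := radius (adjMat W)

/-- A digraph is simple: no loops and no multiple arcs. -/
def Simple (W : Fin n → Fin n → ℕ) : Prop :=
  (∀ i, W i i = 0) ∧ ∀ i j, W i j ≤ 1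

/-- Strong connectivity: every vertex is reachable from every vertex by a directed path. -/
def StronglyConnected (W : Fin n → Fin n → ℕ) : Prop :=
  ∀ i j : Fin n, Relation.ReflTransGen (fun a b => W a b ≠ 0) i j

/-- Isomorphism of digraphs on `Fin n`. -/
def Iso (W W' : Fin n → Fin n → ℕ) : Prop :=
  ∃ e : Fin n ≃ Fin n, ∀ i j, W (e i) (e j) = W' i j

/-- The clique number: maximum size of a set of vertices with all arcs in both directions. -/
noncomputable def cliqueNum (W : Fin n → Fin n → ℕ) : ℕ :=
  sSup {d : ℕ | ∃ s : Finset (Fin n), s.card = d ∧ ∀ i ∈ s, ∀ j ∈ s, i ≠ j → W i j ≠ 0}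

/-- `W` has a directed cycle of length `c`. -/
def HasCycleLen (W : Fin n → Fin n → ℕ) (c : ℕ) : Prop :=
  ∃ (hc : 2 ≤ c) (p : Fin c → Fin n), Function.Injective p ∧
    ∀ i : Fin c, W (p i) (p ⟨((i : ℕ) + 1) % c, Nat.mod_lt _ (by omega)⟩) ≠ 0

/-- The girth: length of a shortest directed cycle. -/
noncomputable def girth (W : Fin n → Fin n → ℕ) : ℕ := sInf {c | HasCycleLen W c}

/-- The complete digraph `K_n^↔`. -/
def Kcomp (n : ℕ) : Fin n → Fin n → ℕ := fun i j => if i = j then 0 else 1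

/-- The directed cycle `C_n^→`, with arcs `i → i+1 (mod n)`. -/
def cyc (n : ℕ) : Fin n → Fin n → ℕ := fun i j => if (j : ℕ) = ((i : ℕ) + 1) % n then 1 else 0

/-- The digraph `B_{n,d}` (for `2 ≤ d ≤ n-1`): a complete digraph on the vertices
`0, …, d-1` together with a directed path `0 → d → d+1 → ⋯ → n-1 → 1`
(the path `u_1 u_2 ⋯ u_{n-d+2}` with `u_1 = 0`, `u_{n-d+2} = 1`,
and internal vertices `d, …, n-1`). -/
def B (n d : ℕ) : Fin n → Fin n → ℕ := fun i j =>
  if i ≠ j ∧ (i : ℕ) < d ∧ (j : ℕ) < d then 1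
  else if (i : ℕ) = 0 ∧ (j : ℕ) = d then 1
  else if d ≤ (i : ℕ) ∧ (j : ℕ) = (i : ℕ) + 1 then 1
  else if (i : ℕ) = n - 1 ∧ (j : ℕ) = 1 then 1
  else 0

/-- `B'_{n,d} = B_{n,d} − (u_{n-d+1}, u_{n-d+2}) + (u_{n-d+1}, u_1)`, i.e. the arc
`n-1 → 1` is replaced by the arc `n-1 → 0`. -/
def B' (n d : ℕ) : Fin n → Fin n → ℕ := fun i j =>
  if (i : ℕ) = n - 1 ∧ (j : ℕ) = 1 then 0
  else if (i : ℕ) = n - 1 ∧ (j : ℕ) = 0 then 1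
  else B n d i j

/-- The digraph `C_{n,g}` (for `2 ≤ g ≤ n-1`): vertices `u_1, …, u_n` are `0, …, n-1`,
with arcs `i → i+1` for `0 ≤ i ≤ n-2` together with the arcs `g-1 → 0` and `n-1 → 0`. -/
def Cng (n g : ℕ) : Fin n → Fin n → ℕ := fun i j =>
  if (j : ℕ) = (i : ℕ) + 1 then 1
  else if ((i : ℕ) = g - 1 ∨ (i : ℕ) = n - 1) ∧ (j : ℕ) = 0 then 1
  else 0

/-- `C'_{n,g} = C_{n,g} − (u_n, u_1) + (u_n, u_g)`, i.e. the arc `n-1 → 0` is replaced by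
the arc `n-1 → g-1`. -/
def Cng' (n g : ℕ) : Fin n → Fin n → ℕ := fun i j =>
  if (i : ℕ) = n - 1 ∧ (j : ℕ) = 0 then 0
  else if (i : ℕ) = n - 1 ∧ (j : ℕ) = g - 1 then 1
  else Cng n g i j

/-- The θ-digraph `θ(a,b,c)` realized on `Fin n` (intended for `n = a + b + c + 2`):
vertex `0` is the common initial vertex of the paths `P_{a+2}`, `P_{b+2}` and terminal
vertex of `P_{c+2}`; vertex `1` is the common terminal vertex of `P_{a+2}`, `P_{b+2}`
and initial vertex of `P_{c+2}`; the internal vertices of the three paths are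
`2, …, a+1`, `a+2, …, a+b+1` and `a+b+2, …, a+b+c+1` respectively. -/
def theta (n a b c : ℕ) : Fin n → Fin n → ℕ := fun i j =>
  if ((a = 0 ∧ (i : ℕ) = 0 ∧ (j : ℕ) = 1) ∨
      (a ≠ 0 ∧ (((i : ℕ) = 0 ∧ (j : ℕ) = 2) ∨
        (2 ≤ (i : ℕ) ∧ (i : ℕ) ≤ a ∧ (j : ℕ) = (i : ℕ) + 1) ∨
        ((i : ℕ) = a + 1 ∧ (j : ℕ) = 1))) ∨
      (b = 0 ∧ (i : ℕ) = 0 ∧ (j : ℕ) = 1) ∨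
      (b ≠ 0 ∧ (((i : ℕ) = 0 ∧ (j : ℕ) = a + 2) ∨
        (a + 2 ≤ (i : ℕ) ∧ (i : ℕ) ≤ a + b ∧ (j : ℕ) = (i : ℕ) + 1) ∨
        ((i : ℕ) = a + b + 1 ∧ (j : ℕ) = 1))) ∨
      (c = 0 ∧ (i : ℕ) = 1 ∧ (j : ℕ) = 0) ∨
      (c ≠ 0 ∧ (((i : ℕ) = 1 ∧ (j : ℕ) = a + b + 2) ∨
        (a + b + 2 ≤ (i : ℕ) ∧ (i : ℕ) ≤ a + b + c ∧ (j : ℕ) = (i : ℕ) + 1) ∨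
        ((i : ℕ) = a + b + c + 1 ∧ (j : ℕ) = 0))))
  then 1 else 0

/-- The digraph `K→(n,k,m)`: the vertex set is partitioned into
`V₁ = {0,…,m-1}`, `S = {m,…,m+k-1}`, `V₂ = {m+k,…,n-1}`; it is the complete digraph
with all arcs from `V₂` to `V₁` removed. -/
def Kdir (n k m : ℕ) : Fin n → Fin n → ℕ := fun i j =>
  if i = j then 0
  else if m + k ≤ (i : ℕ) ∧ (j : ℕ) < m then 0
  else 1

/-- The digraph `D_{uv}` obtained from `D` by deleting the arc `(u,v)`, identifying `u`
with `v` (the merged vertex is `v`; the vertex `u` becomes isolated) and deleting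
multiple arcs (and loops). -/
def contract (W : Fin n → Fin n → ℕ) (u v : Fin n) : Fin n → Fin n → ℕ :=
  fun i j =>
    if i = u ∨ j = u ∨ i = j then 0
    else if i = v then min 1 (W v j + W u j)
    else if j = v then min 1 (W i v + W i u)
    else min 1 (W i j)

/-- The digraph `D^w` obtained from `D` by subdividing the arc `(u,v)` with a new
vertex `w` (realized as the last vertex of `Fin (n+1)`). -/
def subdivide (W : Fin n → Fin n → ℕ) (u v : Fin n) : Fin (n + 1) → Fin (n + 1) → ℕ :=
  fun i j =>
    if hi : (i : ℕ) < n then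
      if hj : (j : ℕ) < n then
        if (⟨(i : ℕ), hi⟩ : Fin n) = u ∧ (⟨(j : ℕ), hj⟩ : Fin n) = v then 0
        else W ⟨(i : ℕ), hi⟩ ⟨(j : ℕ), hj⟩
      else if (⟨(i : ℕ), hi⟩ : Fin n) = u then 1 else 0
    else
      if hj : (j : ℕ) < n then (if (⟨(j : ℕ), hj⟩ : Fin n) = v then 1 else 0)
      else 0

end SignlessDigraph

/-!
Both bounds on `q(B_{n,d})` come from comparing the nonnegative matrix `Q` with test data.
Above: every eigenvalue of `Q` lies in a Gershgorin disc of `Qᵀ`, and the `k`-th column sum of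
`Q` is `d⁺_k + d⁻_k`, so `q(D) ≤ max_k (d⁺_k + d⁻_k)`, which is `2d - 1` for `B_{n,d}`.
Below: if `r • v ≤ Q *ᵥ v` for some nonzero `v ≥ 0`, then `r ^ k ≤ ‖Q ^ k‖_∞` for all `k`, and
Gelfand's formula gives `r ≤ q(D)`; for `B_{n,d}` the indicator of the clique, raised by `t = 1/d`
at the vertex `u₁` carrying the extra out-arc, works with `r = 2d - 2 + t`.
For the regular digraphs `C_n^→` and `K_n^↔` the two bounds meet, with `v` the all-ones vector.
-/

open Finset

namespace Matrix

variable {ι : Type*} [Fintype ι]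

lemma mulVec_mono_of_nonneg {M : Matrix ι ι ℝ} (hM : ∀ i j, 0 ≤ M i j) {v w : ι → ℝ}
    (h : v ≤ w) : M *ᵥ v ≤ M *ᵥ w :=
  fun i => sum_le_sum fun j _ => mul_le_mul_of_nonneg_left (h j) (hM i j)

variable [DecidableEq ι]

lemma spectrum_transpose (A : Matrix ι ι ℂ) : spectrum ℂ Aᵀ = spectrum ℂ A := by
  ext μ
  have h : algebraMap ℂ (Matrix ι ι ℂ) μ - Aᵀ = (algebraMap ℂ (Matrix ι ι ℂ) μ - A)ᵀ := by
    rw [transpose_sub, algebraMap_eq_diagonal, diagonal_transpose]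
  rw [spectrum.mem_iff, spectrum.mem_iff, h, isUnit_transpose]

lemma exists_norm_le_sum_col_of_mem_spectrum {A : Matrix ι ι ℂ} {μ : ℂ}
    (hμ : μ ∈ spectrum ℂ A) : ∃ k, ‖μ‖ ≤ ∑ j, ‖A j k‖ := by
  rw [← spectrum_transpose, ← AlgEquiv.spectrum_eq (toLinAlgEquiv' : Matrix ι ι ℂ ≃ₐ[ℂ] _),
    ← Module.End.hasEigenvalue_iff_mem_spectrum] at hμ
  obtain ⟨k, hk⟩ := eigenvalue_mem_ball hμ
  rw [Metric.mem_closedBall, dist_eq_norm] at hk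
  refine ⟨k, ?_⟩
  calc ‖μ‖ ≤ ‖A k k‖ + ‖μ - A k k‖ := norm_le_norm_add_norm_sub' μ (A k k)
    _ ≤ ‖A k k‖ + ∑ j ∈ univ.erase k, ‖A j k‖ := by
      gcongr
      simpa only [transpose_apply] using hk
    _ = ∑ j, ‖A j k‖ := add_sum_erase _ (fun j => ‖A j k‖) (mem_univ k)

lemma pow_smul_le_pow_mulVec {M : Matrix ι ι ℝ} (hM : ∀ i j, 0 ≤ M i j) {r : ℝ} (hr : 0 ≤ r)
    {v : ι → ℝ} (h : r • v ≤ M *ᵥ v) (k : ℕ) : r ^ k • v ≤ M ^ k *ᵥ v := by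
  induction k with
  | zero => simp
  | succ k ih =>
    calc r ^ (k + 1) • v = r ^ k • (r • v) := by rw [pow_succ, mul_smul]
      _ ≤ r ^ k • (M *ᵥ v) := smul_le_smul_of_nonneg_left h (pow_nonneg hr k)
      _ = M *ᵥ (r ^ k • v) := (mulVec_smul M _ v).symm
      _ ≤ M *ᵥ (M ^ k *ᵥ v) := mulVec_mono_of_nonneg hM ih
      _ = M ^ (k + 1) *ᵥ v := by rw [mulVec_mulVec, pow_succ']

attribute [local instance] Matrix.linftyOpNormedAddCommGroup Matrix.linftyOpNormedRing
  Matrix.linftyOpNormedAlgebra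

lemma pow_le_linfty_opNorm_pow {M : Matrix ι ι ℝ} (hM : ∀ i j, 0 ≤ M i j) {r : ℝ} (hr : 0 ≤ r)
    {v : ι → ℝ} (hv : 0 ≤ v) (hv0 : v ≠ 0) (h : r • v ≤ M *ᵥ v) (k : ℕ) :
    r ^ k ≤ ‖M ^ k‖ := by
  have hle := pow_smul_le_pow_mulVec hM hr h k
  have hnonneg : 0 ≤ r ^ k • v := smul_nonneg (pow_nonneg hr k) hv
  refine le_of_mul_le_mul_right ?_ (norm_pos_iff.mpr hv0)
  calc r ^ k * ‖v‖ = ‖r ^ k • v‖ := by rw [norm_smul, Real.norm_of_nonneg (pow_nonneg hr k)]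
    _ ≤ ‖M ^ k *ᵥ v‖ := (pi_norm_le_iff_of_nonneg (norm_nonneg _)).mpr fun i =>
        (abs_le_abs_of_nonneg (hnonneg i) (hle i)).trans (norm_le_pi_norm (M ^ k *ᵥ v) i)
    _ ≤ ‖M ^ k‖ * ‖v‖ := linfty_opNorm_mulVec _ _

lemma linfty_opNorm_map_ofReal (M : Matrix ι ι ℝ) : ‖M.map ((↑) : ℝ → ℂ)‖ = ‖M‖ := by
  simp [linfty_opNorm_def]

end Matrix

lemma ofReal_le_spectralRadius_of_pow_le_norm_pow {A : Type*} [NormedRing A]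
    [NormedAlgebra ℂ A] [CompleteSpace A] {a : A} {r : ℝ} (hr : 0 ≤ r)
    (h : ∀ k : ℕ, r ^ k ≤ ‖a ^ k‖) : ENNReal.ofReal r ≤ spectralRadius ℂ a := by
  refine ge_of_tendsto (spectrum.pow_norm_pow_one_div_tendsto_nhds_spectralRadius a) ?_
  filter_upwards [Filter.eventually_ne_atTop 0] with k hk
  gcongr
  calc r = (r ^ k) ^ (1 / k : ℝ) := by rw [one_div, Real.pow_rpow_inv_natCast hr hk]
    _ ≤ ‖a ^ k‖ ^ (1 / k : ℝ) := by gcongr; exact h k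

namespace SignlessDigraph

section Radius

variable {n : ℕ}

lemma radius_nonneg (M : Matrix (Fin n) (Fin n) ℝ) : 0 ≤ radius M :=
  Real.sSup_nonneg (by rintro _ ⟨μ, -, rfl⟩; positivity)

lemma norm_le_radius {M : Matrix (Fin n) (Fin n) ℝ} {μ : ℂ}
    (hμ : μ ∈ spectrum ℂ (M.map ((↑) : ℝ → ℂ))) : ‖μ‖ ≤ radius M := by
  refine le_csSup ?_ ⟨μ, hμ, rfl⟩
  obtain ⟨c, hc⟩ := ((finite_spectrum (M.map ((↑) : ℝ → ℂ))).image (‖·‖)).bddAbove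
  exact ⟨c, by rintro _ ⟨ν, hν, rfl⟩; exact hc ⟨ν, hν, rfl⟩⟩

lemma radius_le_of_sum_col_le {M : Matrix (Fin n) (Fin n) ℝ} {c : ℝ} (hc : 0 ≤ c)
    (h : ∀ k, ∑ j, |M j k| ≤ c) : radius M ≤ c := by
  refine Real.sSup_le ?_ hc
  rintro _ ⟨μ, hμ, rfl⟩
  obtain ⟨k, hk⟩ := exists_norm_le_sum_col_of_mem_spectrum hμ
  simpa using hk.trans_eq (by simp) |>.trans (h k)

attribute [local instance] Matrix.linftyOpNormedAddCommGroup Matrix.linftyOpNormedRing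
  Matrix.linftyOpNormedAlgebra in
lemma le_radius_of_smul_le_mulVec {M : Matrix (Fin n) (Fin n) ℝ} (hM : ∀ i j, 0 ≤ M i j)
    {r : ℝ} (hr : 0 ≤ r) {v : Fin n → ℝ} (hv : 0 ≤ v) (hv0 : v ≠ 0) (h : r • v ≤ M *ᵥ v) :
    r ≤ radius M := by
  have hlow : ENNReal.ofReal r ≤ spectralRadius ℂ (M.map ((↑) : ℝ → ℂ)) :=
    ofReal_le_spectralRadius_of_pow_le_norm_pow hr fun k => by
      rw [show M.map ((↑) : ℝ → ℂ) ^ k = (M ^ k).map (↑) from (M.map_pow Complex.ofRealHom k).symm,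
        linfty_opNorm_map_ofReal]
      exact pow_le_linfty_opNorm_pow hM hr hv hv0 h k
  have hup : spectralRadius ℂ (M.map ((↑) : ℝ → ℂ)) ≤ ENNReal.ofReal (radius M) :=
    iSup₂_le fun μ hμ => by
      rw [← enorm_eq_nnnorm, ← ofReal_norm]
      exact ENNReal.ofReal_le_ofReal (norm_le_radius hμ)
  exact (ENNReal.ofReal_le_ofReal_iff (radius_nonneg M)).mp (hlow.trans hup)

end Radius

section Digraph

variable {n : ℕ} (W : Fin n → Fin n → ℕ)

lemma Qmat_nonneg (i j : Fin n) : 0 ≤ Qmat W i j := by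
  simp only [Qmat, adjMat, Matrix.add_apply, diagonal_apply]
  positivity

lemma sum_Qmat_col (k : Fin n) : ∑ j, Qmat W j k = outdeg W k + indeg W k := by
  simp [Qmat, adjMat, diagonal_apply, sum_add_distrib, indeg]

lemma Qmat_mulVec (v : Fin n → ℝ) (i : Fin n) :
    (Qmat W *ᵥ v) i = outdeg W i * v i + ∑ j, (W i j : ℝ) * v j := by
  rw [Qmat, add_mulVec, Pi.add_apply, mulVec_diagonal]
  rfl

lemma Qmat_mulVec_one (i : Fin n) : (Qmat W *ᵥ 1) i = 2 * outdeg W i := by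
  simp only [Qmat_mulVec, outdeg, Nat.cast_sum, Pi.one_apply, mul_one]
  ring

lemma q_le_of_outdeg_add_indeg_le {c : ℕ} (h : ∀ k, outdeg W k + indeg W k ≤ c) : q W ≤ c :=
  radius_le_of_sum_col_le c.cast_nonneg fun k => by
    simp_rw [abs_of_nonneg (Qmat_nonneg W _ k), sum_Qmat_col]
    exact_mod_cast h k

lemma le_q_of_smul_le_mulVec {r : ℝ} (hr : 0 ≤ r) {v : Fin n → ℝ} (hv : 0 ≤ v) (hv0 : v ≠ 0)
    (h : r • v ≤ Qmat W *ᵥ v) : r ≤ q W :=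
  le_radius_of_smul_le_mulVec (Qmat_nonneg W) hr hv hv0 h

lemma q_eq_of_regular [NeZero n] {r : ℕ} (hout : ∀ i, outdeg W i = r)
    (hin : ∀ i, indeg W i = r) : q W = 2 * r := by
  apply le_antisymm
  · exact_mod_cast q_le_of_outdeg_add_indeg_le W (c := 2 * r) fun k => by rw [hout, hin]; omega
  · refine le_q_of_smul_le_mulVec W (by positivity) zero_le_one one_ne_zero fun i => ?_
    simp [Qmat_mulVec_one, hout]

end Digraph

lemma cyc_apply {n : ℕ} [NeZero n] (i j : Fin n) : cyc n i j = if j = i + 1 then 1 else 0 := by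
  simp [cyc, Fin.ext_iff, Fin.val_add]

lemma q_cyc {n : ℕ} [NeZero n] : q (cyc n) = 2 := by
  simpa using q_eq_of_regular (cyc n) (r := 1) (fun i => by simp [outdeg, cyc_apply])
    (fun i => by simp [indeg, cyc_apply, ← sub_eq_iff_eq_add])

lemma q_Kcomp {n : ℕ} [NeZero n] : q (Kcomp n) = 2 * n - 2 := by
  rw [q_eq_of_regular (Kcomp n) (r := n - 1)
    (fun i => by simp [outdeg, Kcomp, sum_ite, filter_ne])
    (fun i => by simp [indeg, Kcomp, sum_ite, filter_ne']),
    Nat.cast_sub NeZero.one_le]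
  ring

section B

variable {n d : ℕ}

lemma sum_ite_val_lt {M : Type*} [AddCommMonoid M] (hd : d ≤ n) (x : M) :
    ∑ j : Fin n, (if (j : ℕ) < d then x else 0) = d • x := by
  simp [sum_ite, Fin.card_filter_val_lt, hd]

lemma B_outdeg_of_lt (hdn : d < n) {k : Fin n} (hk : (k : ℕ) < d) :
    outdeg (B n d) k + 1 = d + if (k : ℕ) = 0 then 1 else 0 := by
  have hrow : ∀ j, B n d k j + (if j = k then 1 else 0) = (if (j : ℕ) < d then 1 else 0) +
      if (k : ℕ) = 0 then (if j = ⟨d, hdn⟩ then 1 else 0) else 0 := by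
    intro j
    simp only [B, Fin.ext_iff]
    split_ifs <;> omega
  have := sum_congr rfl fun j (_ : j ∈ univ) => hrow j
  simp only [sum_add_distrib, sum_ite_eq', mem_univ, if_true, sum_ite_val_lt hdn.le,
    sum_ite_irrel, sum_const_zero] at this
  simpa [outdeg] using this

lemma B_indeg_of_lt (hdn : d < n) {k : Fin n} (hk : (k : ℕ) < d) :
    indeg (B n d) k + 1 = d + if (k : ℕ) = 1 then 1 else 0 := by
  have hcol : ∀ j, B n d j k + (if j = k then 1 else 0) = (if (j : ℕ) < d then 1 else 0) +
      if (k : ℕ) = 1 then (if j = ⟨n - 1, by omega⟩ then 1 else 0) else 0 := by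
    intro j
    simp only [B, Fin.ext_iff]
    split_ifs <;> omega
  have := sum_congr rfl fun j (_ : j ∈ univ) => hcol j
  simp only [sum_add_distrib, sum_ite_eq', mem_univ, if_true, sum_ite_val_lt hdn.le,
    sum_ite_irrel, sum_const_zero] at this
  simpa [indeg] using this

lemma B_outdeg_of_le (hd : 2 ≤ d) {k : Fin n} (hk : d ≤ (k : ℕ)) : outdeg (B n d) k = 1 := by
  have hrow : ∀ j, B n d k j =
      if j = ⟨if (k : ℕ) = n - 1 then 1 else k + 1, by split_ifs <;> omega⟩ then 1 else 0 := by
    intro j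
    simp only [B, Fin.ext_iff]
    split_ifs <;> omega
  simp [outdeg, hrow]

lemma B_indeg_of_le (hd : 2 ≤ d) {k : Fin n} (hk : d ≤ (k : ℕ)) : indeg (B n d) k = 1 := by
  have hcol : ∀ j, B n d j k =
      if j = ⟨if (k : ℕ) = d then 0 else k - 1, by split_ifs <;> omega⟩ then 1 else 0 := by
    intro j
    simp only [B, Fin.ext_iff]
    split_ifs <;> omega
  simp [indeg, hcol]

lemma B_outdeg_add_indeg_le (hd : 2 ≤ d) (hdn : d < n) (k : Fin n) :
    outdeg (B n d) k + indeg (B n d) k ≤ 2 * d - 1 := by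
  rcases lt_or_ge (k : ℕ) d with hk | hk
  · have hout := B_outdeg_of_lt hdn hk
    have hin := B_indeg_of_lt hdn hk
    split_ifs at hout hin <;> omega
  · rw [B_outdeg_of_le hd hk, B_indeg_of_le hd hk]
    omega

lemma q_B_lt (hd : 2 ≤ d) (hdn : d < n) : q (B n d) < 2 * d := by
  have := q_le_of_outdeg_add_indeg_le _ (B_outdeg_add_indeg_le hd hdn)
  rw [Nat.cast_sub (by omega)] at this
  push_cast at this
  linarith

lemma B_row_sum_of_lt (hdn : d < n) {k : Fin n} (hk : (k : ℕ) < d) {v : Fin n → ℝ}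
    (hv : ∀ j : Fin n, d ≤ (j : ℕ) → v j = 0) :
    ∑ j, (B n d k j : ℝ) * v j = ∑ j, v j - v k := by
  have hrow : ∀ j, (B n d k j : ℝ) * v j + (if j = k then v j else 0) = v j := by
    intro j
    rcases lt_or_ge (j : ℕ) d with hj | hj
    · simp only [B, Fin.ext_iff]
      split_ifs <;> first | omega | simp
    · simp [hv j hj]
  rw [eq_sub_iff_add_eq, ← sum_congr rfl fun j (_ : j ∈ univ) => hrow j, sum_add_distrib,
    sum_ite_eq']
  simp

lemma lt_q_B (hd : 2 ≤ d) (hdn : d < n) : 2 * d - 2 < q (B n d) := by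
  have hd2 : (2 : ℝ) ≤ d := by exact_mod_cast hd
  set t : ℝ := (d : ℝ)⁻¹
  have ht0 : 0 < t := by positivity
  have htd : t * d = 1 := inv_mul_cancel₀ (by positivity)
  have ht1 : t ≤ 1 := inv_le_one_of_one_le₀ (by linarith)
  let i₀ : Fin n := ⟨0, by omega⟩
  let v : Fin n → ℝ := fun j => (if (j : ℕ) < d then 1 else 0) + if j = i₀ then t else 0
  have hv : 0 ≤ v := fun j => by dsimp only [v]; split_ifs <;> positivity
  have hv0 : v ≠ 0 := fun h => by
    have := congrFun h i₀
    simp only [show 0 < d by omega, ↓reduceIte, Pi.zero_apply, v, i₀] at this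
    linarith
  have hv_out : ∀ j : Fin n, d ≤ (j : ℕ) → v j = 0 := fun j hj => by
    have hj₀ : j ≠ i₀ := fun h => by simp only [h, nonpos_iff_eq_zero, i₀] at hj; omega
    simp [v, hj₀, hj]
  have hv_sum : ∑ j, v j = d + t := by
    simp [v, sum_add_distrib, sum_ite_val_lt hdn.le]
  have key : (2 * d - 2 + t) • v ≤ Qmat (B n d) *ᵥ v := fun k => by
    rcases lt_or_ge (k : ℕ) d with hk | hk
    · have hout := B_outdeg_of_lt hdn hk
      rw [Pi.smul_apply, smul_eq_mul, Qmat_mulVec, B_row_sum_of_lt hdn hk hv_out, hv_sum]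
      by_cases hk0 : (k : ℕ) = 0
      · have hk₀ : k = i₀ := Fin.ext hk0
        simp only [hk0, if_true] at hout
        simp only [v, if_pos hk, if_pos hk₀]
        rw [show (outdeg (B n d) k : ℝ) = d by exact_mod_cast (by omega : outdeg (B n d) k = d)]
        -- this row has slack `1 - (d - 1) t - t²`, nonnegative for `t = 1 / d`
        nlinarith
      · have hk₀ : k ≠ i₀ := fun h => hk0 (congrArg Fin.val h)
        simp only [hk0, if_false] at hout
        simp only [v, if_pos hk, if_neg hk₀]
        rw [show (outdeg (B n d) k : ℝ) = d - 1 by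
          rw [show outdeg (B n d) k = d - 1 by omega, Nat.cast_sub (by omega)]; simp]
        linarith
    · rw [Pi.smul_apply, hv_out k hk, smul_zero]
      simpa using mulVec_mono_of_nonneg (Qmat_nonneg (B n d)) hv k
  have := le_q_of_smul_le_mulVec _ (by linarith) hv hv0 key
  linarith

end B

/-- For `n ≥ 4`:
`2 = q(C_n^→) < q(B_{n,2}) < 4 < q(B_{n,3}) < 6 < ⋯ < 2n-4 < q(B_{n,n-1}) < q(K_n^↔) = 2n-2`,
i.e. `q(C_n^→) = 2`, `q(K_n^↔) = 2n-2`, and `2d-2 < q(B_{n,d}) < 2d` for all `2 ≤ d ≤ n-1`. -/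
theorem q_B_chain {n : ℕ} (hn : 4 ≤ n) :
    q (cyc n) = 2 ∧ q (Kcomp n) = 2 * (n : ℝ) - 2 ∧
    ∀ d : ℕ, 2 ≤ d → d ≤ n - 1 →
      2 * (d : ℝ) - 2 < q (B n d) ∧ q (B n d) < 2 * (d : ℝ) := by
  have : NeZero n := ⟨by omega⟩
  exact ⟨q_cyc, q_Kcomp, fun d hd hdn => ⟨lt_q_B hd (by omega), q_B_lt hd (by omega)⟩⟩

end SignlessDigraph
end

section
/- Let n ≥ 4. Then ρ(C_n^→) < ρ(C_{n,n−1}) < ρ(C_{n,n−2}) < ⋯ < ρ(C_{n,2}); that is, ρ(C_{n,g+1}) < ρ(C_{n,g}) for every g with 2 ≤ g ≤ n−2, and ρ(C_n^→) < ρ(C_{n,n−1}). -/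
open Matrix

namespace Matrix

theorem mem_spectrum_iff_exists_mulVec_eq_smul {ι K : Type*} [Fintype ι] [DecidableEq ι]
    [Field K] (A : Matrix ι ι K) (μ : K) :
    μ ∈ spectrum K A ↔ ∃ v ≠ 0, A *ᵥ v = μ • v := by
  rw [← spectrum_toLin', ← Module.End.hasEigenvalue_iff_mem_spectrum,
    Module.End.hasEigenvalue_iff, Submodule.ne_bot_iff]
  simp only [Module.End.mem_eigenspace_iff, toLin'_apply, and_comm]

theorem norm_le_of_mulVec_eq_smul {ι : Type*} [Fintype ι] {A : Matrix ι ι ℝ}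
    (hA : ∀ i j, 0 ≤ A i j) {w : ι → ℝ} (hw : ∀ i, 0 < w i) {r : ℝ} (hAw : A *ᵥ w = r • w)
    {μ : ℂ} {v : ι → ℂ} (hv : v ≠ 0) (hAv : A.map ((↑) : ℝ → ℂ) *ᵥ v = μ • v) :
    ‖μ‖ ≤ r := by
  obtain ⟨k, hk⟩ := Function.ne_iff.mp hv
  obtain ⟨i, -, hmax⟩ := Finset.exists_max_image Finset.univ (fun i => ‖v i‖ / w i)
    ⟨k, Finset.mem_univ k⟩
  -- `|v| ≤ c • w` entrywise, with equality at `i`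
  set c := ‖v i‖ / w i
  have hvc : ∀ j, ‖v j‖ ≤ c * w j := fun j =>
    (div_le_iff₀ (hw j)).mp (hmax j (Finset.mem_univ j))
  have hvi : ‖v i‖ = c * w i := (div_mul_cancel₀ _ (hw i).ne').symm
  have hvi_pos : 0 < ‖v i‖ := by
    rw [hvi]
    exact mul_pos ((div_pos (norm_pos_iff.mpr hk) (hw k)).trans_le (hmax k (Finset.mem_univ k)))
      (hw i)
  have key : ‖μ‖ * ‖v i‖ ≤ r * ‖v i‖ :=
    calc ‖μ‖ * ‖v i‖ = ‖∑ j, (A i j : ℂ) * v j‖ := by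
          rw [← norm_mul, ← smul_eq_mul, ← Pi.smul_apply, ← hAv]; rfl
      _ ≤ ∑ j, A i j * ‖v j‖ := by
          refine (norm_sum_le _ _).trans_eq (Finset.sum_congr rfl fun j _ => ?_)
          rw [norm_mul, Complex.norm_real, Real.norm_of_nonneg (hA i j)]
      _ ≤ ∑ j, A i j * (c * w j) :=
          Finset.sum_le_sum fun j _ => mul_le_mul_of_nonneg_left (hvc j) (hA i j)
      _ = c * (A *ᵥ w) i := by
          rw [mulVec, dotProduct, Finset.mul_sum]
          exact Finset.sum_congr rfl fun j _ => by ring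
      _ = r * ‖v i‖ := by rw [hAw, hvi, Pi.smul_apply, smul_eq_mul]; ring
  exact le_of_mul_le_mul_right key hvi_pos

end Matrix

namespace SignlessDigraph

theorem radius_eq_of_mulVec_eq_smul {n : ℕ} (hn : 0 < n) {A : Matrix (Fin n) (Fin n) ℝ}
    (hA : ∀ i j, 0 ≤ A i j) {w : Fin n → ℝ} (hw : ∀ i, 0 < w i) {r : ℝ}
    (hAw : A *ᵥ w = r • w) : radius A = r := by
  have hAw_complex : A.map ((↑) : ℝ → ℂ) *ᵥ (fun i => (w i : ℂ)) = (r : ℂ) • fun i => (w i : ℂ) := by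
    ext i
    simpa [mulVec, dotProduct] using congrArg ((↑) : ℝ → ℂ) (congrFun hAw i)
  have hw_ne : (fun i => (w i : ℂ)) ≠ 0 := fun h =>
    (hw ⟨0, hn⟩).ne' (by simpa using congrFun h ⟨0, hn⟩)
  have hr_mem : (r : ℂ) ∈ spectrum ℂ (A.map ((↑) : ℝ → ℂ)) :=
    (mem_spectrum_iff_exists_mulVec_eq_smul _ _).mpr ⟨_, hw_ne, hAw_complex⟩
  -- `r` is itself an eigenvalue, so `|r| ≤ r`
  have hr : 0 ≤ r := by
    have := norm_le_of_mulVec_eq_smul hA hw hAw hw_ne hAw_complex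
    rw [Complex.norm_real, Real.norm_eq_abs] at this
    exact abs_nonneg r |>.trans this
  refine IsGreatest.csSup_eq ⟨⟨r, hr_mem, by rw [Complex.norm_real, Real.norm_of_nonneg hr]⟩, ?_⟩
  rintro s ⟨μ, hμ, rfl⟩
  obtain ⟨v, hv, hAv⟩ := (mem_spectrum_iff_exists_mulVec_eq_smul _ _).mp hμ
  exact norm_le_of_mulVec_eq_smul hA hw hAw hv hAv

theorem adjMat_nonneg {n : ℕ} (W : Fin n → Fin n → ℕ) (i j : Fin n) : 0 ≤ adjMat W i j :=
  Nat.cast_nonneg _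

theorem sum_ite_val_eq_mul {n : ℕ} (f : ℕ → ℝ) (a : ℕ) :
    ∑ j : Fin n, (if (j : ℕ) = a then 1 else 0) * f j = if a < n then f a else 0 := by
  rw [Fin.sum_univ_eq_sum_range (fun k => (if k = a then 1 else 0) * f k)]
  simp [Finset.sum_ite_eq']

theorem adjMat_cyc_mulVec_one {n : ℕ} (hn : 0 < n) : adjMat (cyc n) *ᵥ (fun _ => 1) = 1 := by
  ext i
  simpa [mulVec, dotProduct, adjMat, cyc, Nat.mod_lt _ hn] using
    sum_ite_val_eq_mul (n := n) (fun _ => 1) (((i : ℕ) + 1) % n)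

theorem rho_cyc {n : ℕ} (hn : 0 < n) : rho (cyc n) = 1 :=
  radius_eq_of_mulVec_eq_smul hn (adjMat_nonneg _) (fun _ => one_pos)
    (by rw [adjMat_cyc_mulVec_one hn, one_smul]; rfl)

theorem adjMat_Cng_mulVec {n g : ℕ} (w : ℕ → ℝ) (i : Fin n) :
    (adjMat (Cng n g) *ᵥ fun j => w j) i =
      (if (i : ℕ) + 1 < n then w ((i : ℕ) + 1) else 0) +
        if (i : ℕ) = g - 1 ∨ (i : ℕ) = n - 1 then w 0 else 0 := by
  have hrow : ∀ j : Fin n, (Cng n g i j : ℝ) = (if (j : ℕ) = (i : ℕ) + 1 then 1 else 0) +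
      (if (i : ℕ) = g - 1 ∨ (i : ℕ) = n - 1 then 1 else 0) * if (j : ℕ) = 0 then 1 else 0 := by
    intro j
    unfold Cng
    split_ifs <;> first | omega | simp_all
  have hn : 0 < n := i.pos
  simp only [mulVec, dotProduct, adjMat, hrow, add_mul, mul_assoc, Finset.sum_add_distrib,
    ← Finset.mul_sum, sum_ite_val_eq_mul, hn, if_true]
  split_ifs <;> simp

theorem rho_Cng_eq {n g : ℕ} (hg : 0 < g) (hgn : g < n) {r : ℝ} (hr : 1 < r)
    (hrn : r ^ n = r ^ (n - g) + 1) : rho (Cng n g) = r := by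
  -- the Perron vector of `Cng n g`
  set w : ℕ → ℝ := fun k => if k < g then r ^ k else r ^ (k - g) * (r ^ g - 1) with hw
  have hrg : 1 < r ^ g := one_lt_pow₀ hr hg.ne'
  have hw_pos : ∀ k, 0 < w k := fun k => by
    simp only [hw]
    split_ifs
    · positivity
    · exact mul_pos (by positivity) (by linarith)
  have hw_succ : ∀ k, k + 1 ≠ g → w (k + 1) = r * w k := fun k hk => by
    simp only [hw]
    split_ifs <;> try omega
    · ring
    · rw [Nat.sub_add_comm (by omega)]; ring
  have hw_at_g : w g + w 0 = r * w (g - 1) := by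
    simp only [hw, lt_irrefl, if_false, Nat.sub_self, hg, if_true, Nat.sub_lt hg one_pos]
    rw [← pow_succ', Nat.sub_add_cancel hg]
    ring
  have hw_last : w 0 = r * w (n - 1) := by
    simp only [hw, hg, if_true, show ¬ n - 1 < g by omega, if_false]
    calc (r ^ 0 : ℝ) = r ^ n - r ^ (n - g) := by rw [hrn]; ring
      _ = r * (r ^ (n - 1 - g) * (r ^ g - 1)) := by
        rw [← mul_assoc, ← pow_succ', show n - 1 - g + 1 = n - g by omega, mul_sub,
          ← pow_add, Nat.sub_add_cancel hgn.le]
        ring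
  refine radius_eq_of_mulVec_eq_smul (by omega) (adjMat_nonneg _) (fun i => hw_pos i) ?_
  ext i
  rw [adjMat_Cng_mulVec, Pi.smul_apply, smul_eq_mul]
  have hi := i.isLt
  by_cases h_last : (i : ℕ) = n - 1
  · rw [if_neg (by omega), if_pos (Or.inr h_last), h_last, zero_add, hw_last]
  by_cases h_g : (i : ℕ) = g - 1
  · rw [if_pos (by omega), if_pos (Or.inl h_g), h_g, Nat.sub_add_cancel hg, hw_at_g]
  · rw [if_pos (by omega), if_neg (by omega), add_zero, hw_succ _ (by omega)]

theorem exists_one_lt_pow_eq_pow_add_one {m n : ℕ} (hmn : m < n) :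
    ∃ r : ℝ, 1 < r ∧ r ^ n = r ^ m + 1 := by
  have h_two : (2 : ℝ) ^ m + 1 ≤ 2 ^ n :=
    calc (2 : ℝ) ^ m + 1 ≤ 2 ^ m + 2 ^ m := by gcongr; exact one_le_pow₀ one_le_two
      _ = 2 ^ (m + 1) := by ring
      _ ≤ 2 ^ n := pow_le_pow_right₀ one_le_two hmn
  have h_sign : (0 : ℝ) ∈ Set.Icc (1 ^ n - 1 ^ m - 1) (2 ^ n - 2 ^ m - 1) :=
    ⟨by norm_num, by linarith⟩
  obtain ⟨r, hr, hr_root⟩ := intermediate_value_Icc (one_le_two : (1 : ℝ) ≤ 2)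
    (f := fun x => x ^ n - x ^ m - 1) (by fun_prop) h_sign
  refine ⟨r, hr.1.lt_of_ne ?_, by linarith [show r ^ n - r ^ m - 1 = 0 from hr_root]⟩
  rintro rfl
  norm_num at hr_root

theorem exists_rho_Cng_eq {n g : ℕ} (hg : 0 < g) (hgn : g < n) :
    ∃ r : ℝ, 1 < r ∧ r ^ n = r ^ (n - g) + 1 ∧ rho (Cng n g) = r := by
  obtain ⟨r, hr, hrn⟩ := exists_one_lt_pow_eq_pow_add_one (show n - g < n by omega)
  exact ⟨r, hr, hrn, rho_Cng_eq hg hgn hr hrn⟩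

theorem strictMonoOn_pow_sub_pow {m n : ℕ} (hmn : m < n) :
    StrictMonoOn (fun x : ℝ => x ^ n - x ^ m) (Set.Ici 1) := by
  intro x (hx : 1 ≤ x) y (hy : 1 ≤ y) hxy
  have hfactor : ∀ z : ℝ, z ^ n - z ^ m = z ^ m * (z ^ (n - m) - 1) := fun z => by
    rw [mul_sub, mul_one, ← pow_add, Nat.add_sub_cancel' hmn.le]
  simp only [hfactor]
  have hx' : 0 ≤ x ^ (n - m) - 1 := sub_nonneg.mpr (one_le_pow₀ hx)
  calc x ^ m * (x ^ (n - m) - 1) ≤ y ^ m * (x ^ (n - m) - 1) := by gcongr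
    _ < y ^ m * (y ^ (n - m) - 1) := by gcongr; omega

theorem lt_of_pow_eq_pow_add_one {k m n : ℕ} (hkm : k < m) (hmn : m < n) {s r : ℝ}
    (hs : 1 < s) (hr : 1 ≤ r) (hsn : s ^ n = s ^ k + 1) (hrn : r ^ n = r ^ m + 1) : s < r := by
  have hsk : s ^ k < s ^ m := pow_lt_pow_right₀ hs hkm
  refine (strictMonoOn_pow_sub_pow hmn).lt_iff_lt hs.le hr |>.mp ?_
  linarith

/-- For `n ≥ 4`:
`ρ(C_n^→) < ρ(C_{n,n-1}) < ρ(C_{n,n-2}) < ⋯ < ρ(C_{n,2})`. -/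
theorem rho_Cng_chain {n : ℕ} (hn : 4 ≤ n) :
    rho (cyc n) < rho (Cng n (n - 1)) ∧
    ∀ g : ℕ, 2 ≤ g → g ≤ n - 2 → rho (Cng n (g + 1)) < rho (Cng n g) := by
  refine ⟨?_, fun g hg hgn => ?_⟩
  · obtain ⟨r, hr, -, hρ⟩ := exists_rho_Cng_eq (n := n) (g := n - 1) (by omega) (by omega)
    rw [rho_cyc (by omega), hρ]
    exact hr
  · obtain ⟨r, hr, hrn, hρ⟩ := exists_rho_Cng_eq (n := n) (g := g) (by omega) (by omega)
    obtain ⟨s, hs, hsn, hσ⟩ := exists_rho_Cng_eq (n := n) (g := g + 1) (by omega) (by omega)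
    rw [hρ, hσ]
    exact lt_of_pow_eq_pow_add_one (by omega) (by omega) hs hr.le hsn hrn

end SignlessDigraph
end

section
/- Let n ≥ 4. Then K→(n,n−2,1) is the unique digraph achieving the second maximum spectral radius (n−2+sqrt(n^2−4))/2 among all simple strongly connected digraphs on n vertices; that is, every simple strongly connected digraph D on n vertices not isomorphic to the complete digraph K_n^↔ satisfies ρ(D) ≤ (n−2+sqrt(n^2−4))/2, with equality if and only if D is isomorphic to K→(n,n−2,1). -/
/-!
A simple digraph other than `K_n^↔` misses an arc `(p, q)`, so its adjacency matrix is entrywise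
below that of `K_n^↔` minus `(p, q)`. That matrix has the eigenvalue `x`, where
`x² = (n - 2)(x + 1)`, with the positive left eigenvector `u q = x`, `u i = x + 1` otherwise. Pairing `u` with the modulus
vector `|v|` of any eigenvector (`|μ| |v| ≤ A |v|`) bounds every eigenvalue by `x`
(Collatz–Wielandt). If `|μ| = x`, the same pairing forces `|v|` to be an eigenvector for `x` of
both matrices; since the square of `K_n^↔` minus an arc is positive for `n ≥ 4`, `|v|` is positive,
and then the two matrices coincide.
-/

open Matrix

namespace SignlessDigraph

variable {n : ℕ}

section NonnegMatrix

variable {ι : Type*} [Fintype ι]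

theorem mem_spectrum_iff_exists_mulVec_eq_smul [DecidableEq ι] {M : Matrix ι ι ℂ} {μ : ℂ} :
    μ ∈ spectrum ℂ M ↔ ∃ v ≠ 0, M *ᵥ v = μ • v := by
  rw [← spectrum_toLin', ← Module.End.hasEigenvalue_iff_mem_spectrum]
  constructor
  · intro h
    obtain ⟨v, hv⟩ := h.exists_hasEigenvector
    exact ⟨v, hv.2, by simpa using hv.apply_eq_smul⟩
  · rintro ⟨v, hv, h⟩
    exact Module.End.hasEigenvalue_of_hasEigenvector ⟨by simpa using h, hv⟩

theorem eq_zero_of_dotProduct_nonpos {u f : ι → ℝ} (hu : ∀ i, 0 < u i) (hf : 0 ≤ f)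
    (h : u ⬝ᵥ f ≤ 0) : f = 0 := by
  have hterm : ∀ i ∈ Finset.univ, 0 ≤ u i * f i := fun i _ => mul_nonneg (hu i).le (hf i)
  have hsum := (Finset.sum_eq_zero_iff_of_nonneg hterm).1 (le_antisymm h (Finset.sum_nonneg hterm))
  funext i
  exact (mul_eq_zero.1 (hsum i (Finset.mem_univ i))).resolve_left (hu i).ne'

theorem mulVec_eq_smul_of_smul_le {A : Matrix ι ι ℝ} {u w : ι → ℝ} {c : ℝ}
    (hu : ∀ i, 0 < u i) (huA : u ᵥ* A ≤ c • u) (hw : 0 ≤ w) (hAw : c • w ≤ A *ᵥ w) :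
    A *ᵥ w = c • w := by
  have h := eq_zero_of_dotProduct_nonpos hu (sub_nonneg.2 hAw) <| by
    rw [dotProduct_sub, dotProduct_mulVec, dotProduct_smul, ← smul_dotProduct, sub_nonpos]
    exact dotProduct_le_dotProduct_of_nonneg_right huA hw
  exact sub_eq_zero.1 h

theorem smul_norm_le_mulVec_norm {A : Matrix ι ι ℝ} (hA : ∀ i j, 0 ≤ A i j) {μ : ℂ}
    {v : ι → ℂ} (h : A.map (↑) *ᵥ v = μ • v) :
    ‖μ‖ • (‖v ·‖) ≤ A *ᵥ (‖v ·‖) := fun i => calc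
  ‖μ‖ * ‖v i‖ = ‖∑ j, (A i j : ℂ) * v j‖ := by
    rw [← norm_mul, ← smul_eq_mul, ← Pi.smul_apply, ← h]; rfl
  _ ≤ ∑ j, ‖(A i j : ℂ) * v j‖ := norm_sum_le _ _
  _ = ∑ j, A i j * ‖v j‖ := by
    simp only [norm_mul, Complex.norm_real, Real.norm_of_nonneg (hA i _)]

theorem mulVec_norm_eq_smul_of_le_norm {A : Matrix ι ι ℝ} (hA : ∀ i j, 0 ≤ A i j)
    {u : ι → ℝ} (hu : ∀ i, 0 < u i) {c : ℝ} (huA : u ᵥ* A ≤ c • u) {μ : ℂ} {v : ι → ℂ}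
    (h : A.map (↑) *ᵥ v = μ • v) (hc : c ≤ ‖μ‖) :
    A *ᵥ (‖v ·‖) = c • (‖v ·‖) :=
  mulVec_eq_smul_of_smul_le hu huA (fun _ => norm_nonneg _)
    ((smul_le_smul_of_nonneg_right hc fun _ => norm_nonneg _).trans
      (smul_norm_le_mulVec_norm hA h))

theorem norm_le_of_vecMul_le {A : Matrix ι ι ℝ} (hA : ∀ i j, 0 ≤ A i j)
    {u : ι → ℝ} (hu : ∀ i, 0 < u i) {c : ℝ} (huA : u ᵥ* A ≤ c • u) {μ : ℂ} {v : ι → ℂ}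
    (hv : v ≠ 0) (h : A.map (↑) *ᵥ v = μ • v) : ‖μ‖ ≤ c := by
  by_contra! hlt
  obtain ⟨j, hj⟩ := Function.ne_iff.1 hv
  have hμc := smul_norm_le_mulVec_norm hA h j
  rw [mulVec_norm_eq_smul_of_le_norm hA hu huA h hlt.le] at hμc
  exact hlt.not_ge (le_of_mul_le_mul_right hμc (norm_pos_iff.2 hj))

theorem pos_of_mulVec_eq_smul {B : Matrix ι ι ℝ} (hB : ∀ i j, 0 < (B * B) i j)
    {w : ι → ℝ} (hw : 0 ≤ w) (hw0 : w ≠ 0) {c : ℝ} (h : B *ᵥ w = c • w) (i : ι) :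
    0 < w i := by
  obtain ⟨j, hj⟩ := Function.ne_iff.1 hw0
  have hpos : 0 < ((B * B) *ᵥ w) i :=
    Finset.sum_pos' (fun k _ => mul_nonneg (hB i k).le (hw k))
      ⟨j, Finset.mem_univ _, mul_pos (hB i j) ((hw j).lt_of_ne' hj)⟩
  rw [← mulVec_mulVec, h, mulVec_smul, h, smul_smul, Pi.smul_apply, smul_eq_mul] at hpos
  exact pos_of_mul_pos_right hpos (mul_self_nonneg c)

theorem eq_of_le_of_mulVec_eq {A B : Matrix ι ι ℝ} (hAB : ∀ i j, A i j ≤ B i j)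
    {w : ι → ℝ} (hw : ∀ i, 0 < w i) (h : A *ᵥ w = B *ᵥ w) : A = B := by
  ext i j
  have hterm : ∀ k ∈ Finset.univ, 0 ≤ (B i k - A i k) * w k :=
    fun k _ => mul_nonneg (sub_nonneg.2 (hAB i k)) (hw k).le
  have hsum : ∑ k, (B i k - A i k) * w k = 0 := by
    simp only [sub_mul, Finset.sum_sub_distrib]
    exact sub_eq_zero.2 (congrFun h i).symm
  have := (Finset.sum_eq_zero_iff_of_nonneg hterm).1 hsum j (Finset.mem_univ j)
  linarith [(mul_eq_zero.1 this).resolve_right (hw j).ne']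

theorem vecMul_le_vecMul_of_le {A B : Matrix ι ι ℝ} (hAB : ∀ i j, A i j ≤ B i j)
    {u : ι → ℝ} (hu : 0 ≤ u) : u ᵥ* A ≤ u ᵥ* B := fun j =>
  Finset.sum_le_sum fun i _ => mul_le_mul_of_nonneg_left (hAB i j) (hu i)

theorem norm_lt_of_le_of_ne {A B : Matrix ι ι ℝ} (hA : ∀ i j, 0 ≤ A i j)
    (hAB : ∀ i j, A i j ≤ B i j) (hne : A ≠ B) (hB : ∀ i j, 0 < (B * B) i j)
    {u : ι → ℝ} (hu : ∀ i, 0 < u i) {c : ℝ} (huB : u ᵥ* B = c • u) {μ : ℂ} {v : ι → ℂ}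
    (hv : v ≠ 0) (h : A.map (↑) *ᵥ v = μ • v) : ‖μ‖ < c := by
  have huA : u ᵥ* A ≤ c • u := huB ▸ vecMul_le_vecMul_of_le hAB fun i => (hu i).le
  refine (norm_le_of_vecMul_le hA hu huA hv h).lt_of_ne fun hμ => hne ?_
  have hw : 0 ≤ (‖v ·‖) := fun _ => norm_nonneg _
  have hAw := mulVec_norm_eq_smul_of_le_norm hA hu huA h hμ.ge
  have hBw : B *ᵥ (‖v ·‖) = c • (‖v ·‖) := by
    refine mulVec_eq_smul_of_smul_le hu huB.le hw (hAw ▸ fun i => ?_)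
    exact Finset.sum_le_sum fun j _ => mul_le_mul_of_nonneg_right (hAB i j) (hw j)
  have hw0 : (‖v ·‖) ≠ 0 := fun h0 => hv (funext fun i => norm_eq_zero.1 (congrFun h0 i))
  exact eq_of_le_of_mulVec_eq hAB (pos_of_mulVec_eq_smul hB hw hw0 hBw) (hAw.trans hBw.symm)

end NonnegMatrix

theorem radius_le_of_vecMul_le {A : Matrix (Fin n) (Fin n) ℝ} (hA : ∀ i j, 0 ≤ A i j)
    {u : Fin n → ℝ} (hu : ∀ i, 0 < u i) {c : ℝ} (hc : 0 ≤ c) (huA : u ᵥ* A ≤ c • u) :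
    radius A ≤ c := by
  refine Real.sSup_le ?_ hc
  rintro _ ⟨μ, hμ, rfl⟩
  obtain ⟨v, hv, h⟩ := mem_spectrum_iff_exists_mulVec_eq_smul.1 hμ
  exact norm_le_of_vecMul_le hA hu huA hv h

theorem radius_eq_of_mulVec_eq_smul_s19 {A : Matrix (Fin n) (Fin n) ℝ} (hA : ∀ i j, 0 ≤ A i j)
    {u : Fin n → ℝ} (hu : ∀ i, 0 < u i) {c : ℝ} (hc : 0 ≤ c) (huA : u ᵥ* A ≤ c • u)
    {v : Fin n → ℝ} (hv : v ≠ 0) (hAv : A *ᵥ v = c • v) : radius A = c := by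
  refine le_antisymm (radius_le_of_vecMul_le hA hu hc huA) (le_csSup ?_ ⟨c, ?_, ?_⟩)
  · refine ⟨c, ?_⟩
    rintro _ ⟨μ, hμ, rfl⟩
    obtain ⟨w, hw, h⟩ := mem_spectrum_iff_exists_mulVec_eq_smul.1 hμ
    exact norm_le_of_vecMul_le hA hu huA hw h
  · refine mem_spectrum_iff_exists_mulVec_eq_smul.2 ⟨(↑) ∘ v, ?_, funext fun i => ?_⟩
    · exact fun h0 => hv (funext fun i => Complex.ofReal_injective (congrFun h0 i))
    · have h := (RingHom.map_mulVec Complex.ofRealHom A v i).symm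
      rw [hAv] at h
      simp only [Pi.smul_apply, smul_eq_mul, map_mul, Function.comp_apply] at h ⊢
      exact h
  · simp [abs_of_nonneg hc]

theorem radius_lt_of_forall_norm_lt {A : Matrix (Fin n) (Fin n) ℝ} {c : ℝ} (hc : 0 < c)
    (h : ∀ μ ∈ spectrum ℂ (A.map ((↑) : ℝ → ℂ)), ‖μ‖ < c) : radius A < c := by
  unfold radius
  set S := {r : ℝ | ∃ μ ∈ spectrum ℂ (A.map ((↑) : ℝ → ℂ)), r = ‖μ‖}
  rcases S.eq_empty_or_nonempty with hS | hS
  · rwa [hS, Real.sSup_empty]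
  have hfin : S.Finite := ((finite_spectrum _).image (‖·‖)).subset <| by
    rintro _ ⟨μ, hμ, rfl⟩
    exact ⟨μ, hμ, rfl⟩
  rw [hfin.csSup_lt_iff hS]
  rintro _ ⟨μ, hμ, rfl⟩
  exact h μ hμ

def completeMinusArc (p q : Fin n) : Fin n → Fin n → ℕ :=
  fun i j => if i = j ∨ (i = p ∧ j = q) then 0 else 1

noncomputable def perronRoot (n : ℕ) : ℝ := ((n : ℝ) - 2 + Real.sqrt ((n : ℝ) ^ 2 - 4)) / 2

theorem perronRoot_sq (hn : 2 ≤ n) : perronRoot n ^ 2 = (n - 2) * (perronRoot n + 1) := by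
  have hn' : (2 : ℝ) ≤ n := by exact_mod_cast hn
  have hs := Real.sq_sqrt (show (0 : ℝ) ≤ (n : ℝ) ^ 2 - 4 by nlinarith)
  unfold perronRoot
  linear_combination hs / 4

theorem perronRoot_pos (hn : 3 ≤ n) : 0 < perronRoot n := by
  have hn' : (3 : ℝ) ≤ n := by exact_mod_cast hn
  unfold perronRoot
  linarith [Real.sqrt_nonneg ((n : ℝ) ^ 2 - 4)]

noncomputable def perronVec (q : Fin n) : Fin n → ℝ :=
  fun i => if i = q then perronRoot n else perronRoot n + 1

theorem perronVec_pos (hn : 3 ≤ n) (q i : Fin n) : 0 < perronVec q i := by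
  unfold perronVec
  split_ifs <;> linarith [perronRoot_pos hn]

theorem perronVec_vecMul {p q : Fin n} (hn : 2 ≤ n) (hpq : p ≠ q) :
    perronVec q ᵥ* adjMat (completeMinusArc p q) = perronRoot n • perronVec q := by
  set x := perronRoot n
  have hentry : ∀ i j, perronVec q i * adjMat (completeMinusArc p q) i j =
      (x + 1) - (if i = q then 1 else 0) - (if i = j then perronVec q j else 0) -
        (if i = p then (if j = q then x + 1 else 0) else 0) := by
    intro i j
    simp only [perronVec, adjMat, completeMinusArc, x]
    split_ifs <;> simp_all
  funext j
  simp only [vecMul, dotProduct, hentry, Finset.sum_sub_distrib, Finset.sum_const,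
    Finset.sum_ite_eq', Finset.mem_univ, if_true, Finset.card_univ, Fintype.card_fin,
    nsmul_eq_mul, Pi.smul_apply, smul_eq_mul]
  have hx := perronRoot_sq hn
  by_cases hjq : j = q
  · simp only [hjq, perronVec, if_true]
    linear_combination -hx
  · simp only [hjq, perronVec, if_false]
    linear_combination -hx

theorem adjMat_completeMinusArc_transpose (p q : Fin n) :
    (adjMat (completeMinusArc p q))ᵀ = adjMat (completeMinusArc q p) := by
  ext i j
  simp only [transpose_apply, adjMat, completeMinusArc, eq_comm (a := j), and_comm]

theorem adjMat_completeMinusArc_mulVec {p q : Fin n} (hn : 2 ≤ n) (hpq : p ≠ q) :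
    adjMat (completeMinusArc p q) *ᵥ perronVec p = perronRoot n • perronVec p := by
  rw [← vecMul_transpose, adjMat_completeMinusArc_transpose, perronVec_vecMul hn hpq.symm]

theorem adjMat_completeMinusArc_mul_self_pos (hn : 4 ≤ n) (p q i j : Fin n) :
    0 < (adjMat (completeMinusArc p q) * adjMat (completeMinusArc p q)) i j := by
  -- `k` avoids `q` when `i = p` and `p` otherwise, so neither `i → k` nor `k → j` is `(p, q)`.
  obtain ⟨k, -, hk⟩ := Finset.exists_mem_notMem_of_card_lt_card
    (s := {i, j, if i = p then q else p}) (t := Finset.univ)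
    (by simpa using Finset.card_le_three.trans_lt (by omega))
  simp only [Finset.mem_insert, Finset.mem_singleton, not_or] at hk
  refine Finset.sum_pos' (fun _ _ => mul_nonneg (Nat.cast_nonneg _) (Nat.cast_nonneg _))
    ⟨k, Finset.mem_univ _, ?_⟩
  simp only [completeMinusArc]
  split_ifs at hk ⊢ <;> simp_all

theorem adjMat_injective : Function.Injective (adjMat (n := n)) := fun _ _ h =>
  funext₂ fun i j => Nat.cast_injective (congrFun₂ h i j)

theorem adjMat_le_of_le {W W' : Fin n → Fin n → ℕ} (h : ∀ i j, W i j ≤ W' i j) (i j : Fin n) :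
    adjMat W i j ≤ adjMat W' i j :=
  Nat.cast_le.2 (h i j)

theorem rho_le_perronRoot {p q : Fin n} (hn : 3 ≤ n) (hpq : p ≠ q) {W : Fin n → Fin n → ℕ}
    (hle : ∀ i j, W i j ≤ completeMinusArc p q i j) : rho W ≤ perronRoot n :=
  radius_le_of_vecMul_le (fun _ _ => Nat.cast_nonneg _) (perronVec_pos hn q)
    (perronRoot_pos hn).le <| perronVec_vecMul (by omega) hpq ▸
      vecMul_le_vecMul_of_le (adjMat_le_of_le hle) fun i => (perronVec_pos hn q i).le

theorem rho_lt_perronRoot {p q : Fin n} (hn : 4 ≤ n) (hpq : p ≠ q) {W : Fin n → Fin n → ℕ}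
    (hle : ∀ i j, W i j ≤ completeMinusArc p q i j) (hne : W ≠ completeMinusArc p q) :
    rho W < perronRoot n :=
  radius_lt_of_forall_norm_lt (perronRoot_pos (by omega)) fun _ hμ => by
    obtain ⟨v, hv, h⟩ := mem_spectrum_iff_exists_mulVec_eq_smul.1 hμ
    exact norm_lt_of_le_of_ne (fun _ _ => Nat.cast_nonneg _) (adjMat_le_of_le hle)
      (adjMat_injective.ne hne) (adjMat_completeMinusArc_mul_self_pos hn p q)
      (perronVec_pos (by omega) q) (perronVec_vecMul (by omega) hpq) hv h

theorem rho_completeMinusArc {p q : Fin n} (hn : 3 ≤ n) (hpq : p ≠ q) :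
    rho (completeMinusArc p q) = perronRoot n := by
  refine radius_eq_of_mulVec_eq_smul_s19 (fun _ _ => Nat.cast_nonneg _) (perronVec_pos hn q)
    (perronRoot_pos hn).le (perronVec_vecMul (by omega) hpq).le (v := perronVec p) ?_
    (adjMat_completeMinusArc_mulVec (by omega) hpq)
  exact fun h => (perronVec_pos hn p p).ne' (congrFun h p)

theorem exists_missing_arc {W : Fin n → Fin n → ℕ} (hW : Simple W) (hK : ¬ Iso W (Kcomp n)) :
    ∃ p q, p ≠ q ∧ W p q = 0 := by
  by_contra! h
  refine hK ⟨Equiv.refl _, fun i j => ?_⟩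
  simp only [Equiv.refl_apply, Kcomp]
  split_ifs with hij
  · exact hij ▸ hW.1 i
  · have := hW.2 i j
    have := h i j hij
    omega

theorem le_completeMinusArc {W : Fin n → Fin n → ℕ} (hW : Simple W) {p q : Fin n}
    (h : W p q = 0) (i j : Fin n) : W i j ≤ completeMinusArc p q i j := by
  unfold completeMinusArc
  split_ifs with hij
  · rcases hij with rfl | ⟨rfl, rfl⟩
    exacts [(hW.1 i).le, h.le]
  · exact hW.2 i j

theorem completeMinusArc_apply_equiv (e : Fin n ≃ Fin n) (p q i j : Fin n) :
    completeMinusArc p q (e i) (e j) = completeMinusArc (e.symm p) (e.symm q) i j := by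
  simp only [completeMinusArc, e.injective.eq_iff, ← Equiv.eq_symm_apply]

theorem exists_perm_apply_eq_and_apply_eq {α : Type*} [DecidableEq α] {a b p q : α}
    (hab : a ≠ b) (hpq : p ≠ q) : ∃ e : Equiv.Perm α, e a = p ∧ e b = q := by
  refine ⟨(Equiv.swap a p).trans (Equiv.swap (Equiv.swap a p b) q), ?_, by simp⟩
  have hb : Equiv.swap a p b ≠ p := by
    simpa only [Equiv.swap_apply_left] using (Equiv.swap a p).injective.ne hab.symm
  simp [Equiv.swap_apply_of_ne_of_ne hb.symm hpq]

theorem iso_completeMinusArc_iff {a b : Fin n} (hab : a ≠ b) {W : Fin n → Fin n → ℕ} :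
    Iso W (completeMinusArc a b) ↔ ∃ p q, p ≠ q ∧ W = completeMinusArc p q := by
  constructor
  · rintro ⟨e, he⟩
    refine ⟨e a, e b, e.injective.ne hab, funext₂ fun i j => ?_⟩
    rw [← e.apply_symm_apply i, ← e.apply_symm_apply j, he, completeMinusArc_apply_equiv,
      e.symm_symm, e.apply_symm_apply, e.apply_symm_apply]
  · rintro ⟨p, q, hpq, rfl⟩
    obtain ⟨e, hea, heb⟩ := exists_perm_apply_eq_and_apply_eq hab hpq
    exact ⟨e, fun i j => by rw [completeMinusArc_apply_equiv, ← hea, ← heb,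
      e.symm_apply_apply, e.symm_apply_apply]⟩

theorem Kdir_eq_completeMinusArc (hn : 2 ≤ n) :
    Kdir n (n - 2) 1 = completeMinusArc ⟨n - 1, by omega⟩ ⟨0, by omega⟩ := by
  funext i j
  have := i.isLt
  simp only [Kdir, completeMinusArc, Fin.ext_iff]
  split_ifs <;> omega

theorem rho_second_max_general {n : ℕ} (hn : 4 ≤ n) (W : Fin n → Fin n → ℕ) (hW : Simple W)
    (hK : ¬ Iso W (Kcomp n)) :
    rho W ≤ ((n : ℝ) - 2 + Real.sqrt ((n : ℝ) ^ 2 - 4)) / 2 ∧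
    (rho W = ((n : ℝ) - 2 + Real.sqrt ((n : ℝ) ^ 2 - 4)) / 2 ↔
      Iso W (Kdir n (n - 2) 1)) := by
  obtain ⟨p, q, hpq, hWpq⟩ := exists_missing_arc hW hK
  have hle := le_completeMinusArc hW hWpq
  refine ⟨rho_le_perronRoot (by omega) hpq hle, ?_⟩
  rw [Kdir_eq_completeMinusArc (by omega),
    iso_completeMinusArc_iff (Fin.ne_of_val_ne (by dsimp only; omega))]
  constructor
  · intro hrho
    refine ⟨p, q, hpq, ?_⟩
    by_contra hne
    exact (rho_lt_perronRoot hn hpq hle hne).ne hrho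
  · rintro ⟨p', q', hp'q', rfl⟩
    exact rho_completeMinusArc (by omega) hp'q'

/-- For `n ≥ 4`, `K→(n,n-2,1)` is the unique digraph achieving the
second maximum spectral radius `(n-2+√(n²-4))/2` among simple strongly connected
digraphs on `n` vertices: every such digraph not isomorphic to `K_n^↔` satisfies
`ρ(D) ≤ (n-2+√(n²-4))/2`, with equality iff `D ≅ K→(n,n-2,1)`. -/
theorem rho_second_max {n : ℕ} (hn : 4 ≤ n) (W : Fin n → Fin n → ℕ) (hW : Simple W)
    (hsc : StronglyConnected W) (hK : ¬ Iso W (Kcomp n)) :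
    rho W ≤ ((n : ℝ) - 2 + Real.sqrt ((n : ℝ) ^ 2 - 4)) / 2 ∧
    (rho W = ((n : ℝ) - 2 + Real.sqrt ((n : ℝ) ^ 2 - 4)) / 2 ↔
      Iso W (Kdir n (n - 2) 1)) :=
  rho_second_max_general hn W hW hK

end SignlessDigraph
end
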